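/- Every balanced (h-1)-spread ψ of PG(u-1,2), where h divides u and r = u/h, contains r flats f_{i_1},...,f_{i_r} whose corresponding subspaces are linearly independent, i.e., their span is all of GF(2)^u (equivalently, GF(2)^u is the direct sum of the r corresponding h-dimensional subspaces). -/

import Mathlib

/-- The vector space `GF(2)^n`. -/
abbrev V (n : ℕ) := Fin n → ZMod 2

/-- A `(t-1)`-flat of `PG(n-1,2)`: the set of nonzero points of a
`t`-dimensional `GF(2)`-subspace of `GF(2)^n`. -/
def IsFlat (n t : ℕ) (f : Set (V n)) : Prop :=
  ∃ S : Submodule (ZMod 2) (V n),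
    Module.finrank (ZMod 2) S = t ∧ f = (S : Set (V n)) \ {0}

/-- A balanced `(t-1)`-spread of `PG(n-1,2)`: a collection of `(t-1)`-flats
whose underlying point sets partition the nonzero vectors of `GF(2)^n`. -/
def IsSpread (n t : ℕ) (ψ : Set (Set (V n))) : Prop :=
  (∀ f ∈ ψ, IsFlat n t f) ∧ ψ.PairwiseDisjoint id ∧
    ⋃₀ ψ = {v : V n | v ≠ 0}

/-!
The flats are chosen greedily. A spread consists of exactly `(2^u - 1)/(2^h - 1)` flats. Each flat
meeting a subspace `W` contains a nonzero point of `W`, and these points are distinct because the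
flats are disjoint, so at most `2^dim W - 1` flats meet `W`. When `dim W + h ≤ u` that is fewer
than all of them: some flat avoids `W`, and adding its subspace to `W` raises the dimension by `h`.
Starting from `W = 0`, after `u/h` steps the span is the whole space.
-/

open Module Submodule

theorem Submodule.ncard_sdiff_zero {K M : Type*} [Field K] [AddCommGroup M]
    [Module K M] [FiniteDimensional K M] (S : Submodule K M) :
    ((S : Set M) \ {0}).ncard = Nat.card K ^ finrank K S - 1 := by
  rw [Set.ncard_sdiff_singleton_of_mem S.zero_mem, ← Nat.card_coe_set_eq, SetLike.coe_sort_coe,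
    natCard_eq_pow_finrank (K := K)]

theorem ncard_setOf_ne_zero (n : ℕ) : {v : V n | v ≠ 0}.ncard = 2 ^ n - 1 := by
  have := (⊤ : Submodule (ZMod 2) (V n)).ncard_sdiff_zero
  rwa [top_coe, Nat.card_zmod, finrank_top, finrank_fin_fun, ← Set.compl_eq_univ_sdiff] at this

namespace IsFlat

variable {n t : ℕ} {f : Set (V n)}

theorem ncard (hf : IsFlat n t f) : f.ncard = 2 ^ t - 1 := by
  obtain ⟨S, rfl, rfl⟩ := hf
  simpa using S.ncard_sdiff_zero

theorem nonempty (hf : IsFlat n t f) (ht : 1 ≤ t) : f.Nonempty := by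
  apply Set.nonempty_of_ncard_ne_zero
  rw [hf.ncard]
  have := Nat.one_lt_two_pow (Nat.one_le_iff_ne_zero.1 ht)
  omega

theorem finrank_span_sup_of_disjoint (hf : IsFlat n t f) {W : Submodule (ZMod 2) (V n)}
    (hfW : Disjoint f W) :
    finrank (ZMod 2) ↥(span (ZMod 2) f ⊔ W) = t + finrank (ZMod 2) W := by
  obtain ⟨S, rfl, rfl⟩ := hf
  have hSW : Disjoint S W := disjoint_def.2 fun x hxS hxW ↦ by
    by_contra hx0
    exact Set.disjoint_left.1 hfW ⟨hxS, hx0⟩ hxW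
  rw [span_sdiff_singleton_zero, span_eq, ← finrank_sup_add_finrank_inf_eq, hSW.eq_bot,
    finrank_bot, add_zero]

end IsFlat

theorem two_pow_sub_one_mul_lt {k h : ℕ} (hh : 1 ≤ h) :
    (2 ^ k - 1) * (2 ^ h - 1) < 2 ^ (k + h) - 1 := by
  have hk : 1 ≤ 2 ^ k := Nat.one_le_two_pow
  have hh' : 2 ≤ 2 ^ h := by simpa using Nat.pow_le_pow_right two_pos hh
  zify [hk, hh', Nat.one_le_two_pow]
  rw [pow_add]
  nlinarith

namespace IsSpread

variable {u h : ℕ} {ψ : Set (Set (V u))}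

theorem ncard_mul (hψ : IsSpread u h ψ) : ψ.ncard * (2 ^ h - 1) = 2 ^ u - 1 := by
  obtain ⟨hflat, hdisj, hcover⟩ := hψ
  have hfin : ψ.Finite := Set.toFinite ψ
  rw [← ncard_setOf_ne_zero u, ← hcover, Set.sUnion_eq_biUnion,
    hfin.ncard_biUnion (fun f _ ↦ Set.toFinite f) hdisj,
    finsum_mem_congr rfl fun f hf ↦ (hflat f hf).ncard, finsum_mem_eq_finite_toFinset_sum _ hfin,
    Finset.sum_const, smul_eq_mul, Set.ncard_eq_toFinset_card _ hfin]

theorem ncard_le_of_forall_inter_nonempty (hψ : IsSpread u h ψ)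
    {W : Submodule (ZMod 2) (V u)} (hmeet : ∀ f ∈ ψ, (f ∩ W).Nonempty) :
    ψ.ncard ≤ 2 ^ finrank (ZMod 2) W - 1 := by
  obtain ⟨-, hdisj, hcover⟩ := hψ
  choose! g hgf hgW using hmeet
  have hg0 : ∀ f ∈ ψ, g f ≠ 0 := fun f hf ↦
    (hcover ▸ Set.mem_sUnion_of_mem (hgf f hf) hf : g f ∈ {v : V u | v ≠ 0})
  have hinj : Set.InjOn g ψ := fun f₁ hf₁ f₂ hf₂ hg ↦
    hdisj.elim_set hf₁ hf₂ (g f₁) (hgf f₁ hf₁) (hg ▸ hgf f₂ hf₂)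
  simpa using (Set.ncard_le_ncard_of_injOn (t := (W : Set (V u)) \ {0}) g
    (fun f hf ↦ ⟨hgW f hf, hg0 f hf⟩) hinj).trans_eq W.ncard_sdiff_zero

theorem exists_disjoint_of_finrank_add_le (hψ : IsSpread u h ψ) (hh : 1 ≤ h)
    {W : Submodule (ZMod 2) (V u)} (hW : finrank (ZMod 2) W + h ≤ u) :
    ∃ f ∈ ψ, Disjoint f W := by
  by_contra! hmeet
  have hle := hψ.ncard_le_of_forall_inter_nonempty fun f hf ↦
    Set.not_disjoint_iff_nonempty_inter.1 (hmeet f hf)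
  refine lt_irrefl (2 ^ u - 1) ?_
  calc 2 ^ u - 1 = ψ.ncard * (2 ^ h - 1) := hψ.ncard_mul.symm
    _ ≤ (2 ^ finrank (ZMod 2) W - 1) * (2 ^ h - 1) := Nat.mul_le_mul_right _ hle
    _ < 2 ^ (finrank (ZMod 2) W + h) - 1 := two_pow_sub_one_mul_lt hh
    _ ≤ 2 ^ u - 1 := Nat.sub_le_sub_right (Nat.pow_le_pow_right two_pos hW) 1

theorem exists_injective_finrank_span_iUnion (hψ : IsSpread u h ψ) (hh : 1 ≤ h) :
    ∀ k, k * h ≤ u → ∃ fs : Fin k → Set (V u),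
      (∀ i, fs i ∈ ψ) ∧ Function.Injective fs ∧
        finrank (ZMod 2) (span (ZMod 2) (⋃ i, fs i)) = k * h
  | 0, _ => ⟨Fin.elim0, Fin.rec0, fun i ↦ i.elim0, by simp⟩
  | k + 1, hk => by
    obtain ⟨fs, hmem, hinj, hrank⟩ :=
      hψ.exists_injective_finrank_span_iUnion hh k (by linarith [Nat.succ_mul k h])
    obtain ⟨f, hf, hfW⟩ := hψ.exists_disjoint_of_finrank_add_le hh
      (W := span (ZMod 2) (⋃ i, fs i)) (by rw [hrank, ← Nat.succ_mul]; exact hk)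
    have hflat := hψ.1 f hf
    have hnew : f ∉ Set.range fs := by
      rintro ⟨i, rfl⟩
      obtain ⟨x, hx⟩ := hflat.nonempty hh
      exact Set.disjoint_left.1 hfW hx (subset_span (Set.mem_iUnion_of_mem i hx))
    refine ⟨Fin.cons f fs, Fin.cases hf hmem, Fin.cons_injective_iff.2 ⟨hnew, hinj⟩, ?_⟩
    rw [← Set.sUnion_range, Fin.range_cons, Set.sUnion_insert, Set.sUnion_range, span_union,
      hflat.finrank_span_sup_of_disjoint hfW, hrank, Nat.succ_mul, add_comm]

end IsSpread

/-- Lemma 3: every balanced `(h-1)`-spread of `PG(u-1,2)` (with `h ∣ u`,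
`r = u/h`) contains `r` distinct flats whose corresponding subspaces are
linearly independent, i.e. together they span all of `GF(2)^u`. -/
theorem spread_contains_LIF (u h : ℕ) (hh : 1 ≤ h) (hdvd : h ∣ u)
    (ψ : Set (Set (V u))) (hψ : IsSpread u h ψ) :
    ∃ fs : Fin (u / h) → Set (V u),
      (∀ i, fs i ∈ ψ) ∧ Function.Injective fs ∧
        Submodule.span (ZMod 2) (⋃ i, fs i) = ⊤ := by
  have hr : u / h * h = u := Nat.div_mul_cancel hdvd
  obtain ⟨fs, hmem, hinj, hrank⟩ := hψ.exists_injective_finrank_span_iUnion hh (u / h) hr.le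
  refine ⟨fs, hmem, hinj, eq_top_of_finrank_eq ?_⟩
  rw [hrank, hr, finrank_fin_fun]
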